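/- arXiv:2001.06546 — 2 statements merged into one kernel-verified Lean document; each statement's English description precedes it below -/
import Mathlib

section
/- Let Y be a measurable space in which singletons are measurable and which contains at least three points, and let K be a Markov kernel from Y to Y. Then for every γ ≥ 1, the contraction coefficient of K under E_γ-divergence satisfies η_γ(K) = sup over pairs y₁, y₂ ∈ Y of E_γ(K(y₁)‖K(y₂)). -/
open MeasureTheory ProbabilityTheory Real

noncomputable def Egamma {Y : Type*} [MeasurableSpace Y] (γ : ℝ) (P Q : Measure Y) : ℝ :=
  ⨆ A : {A : Set Y // MeasurableSet A}, ((P A.1).toReal - γ * (Q A.1).toReal)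

noncomputable def etaGamma {Y : Type*} [MeasurableSpace Y] (γ : ℝ) (K : Kernel Y Y) : ℝ :=
  ⨆ p : {p : Measure Y × Measure Y //
      IsProbabilityMeasure p.1 ∧ IsProbabilityMeasure p.2 ∧ Egamma γ p.1 p.2 ≠ 0},
    Egamma γ (p.1.1.bind K) (p.1.2.bind K) / Egamma γ p.1.1 p.1.2

/-!
For a measurable set `B`, put `g y := K y B ∈ [0, 1]` and `m := inf g`. Applying the pointwise
bound `E_γ(K y₁ ‖ K y₂) ≤ r` to the test set `B` gives `g ≤ γ m + r`, so `g - m` takes values in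
`[0, (γ - 1) m + r]`. A Hahn decomposition of `μ - γ ν` shows that a test function with values in
`[0, c]` separates `μ` from `γ ν` by at most `c · E_γ(μ‖ν)`, whence
`(μK)(B) - γ (νK)(B) ≤ ((γ - 1) m + r) E_γ(μ‖ν) - (γ - 1) m ≤ r E_γ(μ‖ν)`.
This proves `η_γ(K) ≤ sup E_γ(K y₁ ‖ K y₂)`; the reverse inequality comes from the pairs of Dirac
masses at distinct points, for which `E_γ(δ_{y₁} ‖ δ_{y₂}) = 1`.
-/

section Egamma

variable {Y : Type*} [MeasurableSpace Y] {γ : ℝ} {P Q : Measure Y}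

instance : Nonempty {A : Set Y // MeasurableSet A} := ⟨⟨∅, .empty⟩⟩

lemma Egamma_le_of_forall {r : ℝ}
    (h : ∀ A, MeasurableSet A → (P A).toReal - γ * (Q A).toReal ≤ r) :
    Egamma γ P Q ≤ r :=
  ciSup_le fun A ↦ h A.1 A.2

lemma le_Egamma [IsFiniteMeasure P] (hγ : 0 ≤ γ) {A : Set Y} (hA : MeasurableSet A) :
    (P A).toReal - γ * (Q A).toReal ≤ Egamma γ P Q := by
  refine le_ciSup (f := fun A : {A : Set Y // MeasurableSet A} ↦
    (P A.1).toReal - γ * (Q A.1).toReal) ⟨P.real Set.univ, ?_⟩ ⟨A, hA⟩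
  rintro _ ⟨B, rfl⟩
  have hQ : 0 ≤ γ * (Q B.1).toReal := by positivity
  have hP : P.real B.1 ≤ P.real Set.univ := measureReal_mono (Set.subset_univ _)
  simp only [measureReal_def] at hP ⊢
  linarith

lemma Egamma_nonneg : 0 ≤ Egamma γ P Q := by
  by_cases hbdd : BddAbove (Set.range fun A : {A : Set Y // MeasurableSet A} ↦
      (P A.1).toReal - γ * (Q A.1).toReal)
  · exact le_ciSup_of_le hbdd ⟨∅, .empty⟩ (by simp)
  · exact (Real.iSup_of_not_bddAbove hbdd).ge

lemma Egamma_le_one [IsProbabilityMeasure P] (hγ : 0 ≤ γ) : Egamma γ P Q ≤ 1 :=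
  Egamma_le_of_forall fun A _ ↦ by
    have hQ : 0 ≤ γ * (Q A).toReal := by positivity
    linarith [measureReal_le_one (μ := P) (s := A), measureReal_def P A]

lemma Egamma_self_eq_zero [IsFiniteMeasure P] (hγ : 1 ≤ γ) : Egamma γ P P = 0 := by
  refine le_antisymm (Egamma_le_of_forall fun A _ ↦ ?_) Egamma_nonneg
  nlinarith [ENNReal.toReal_nonneg (a := P A)]

lemma Egamma_dirac_dirac [MeasurableSingletonClass Y] (hγ : 0 ≤ γ) {x z : Y} (hxz : x ≠ z) :
    Egamma γ (Measure.dirac x) (Measure.dirac z) = 1 := by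
  refine le_antisymm (Egamma_le_one hγ) ?_
  simpa [hxz.symm] using le_Egamma (P := Measure.dirac x) (Q := Measure.dirac z) hγ
    (measurableSet_singleton x)

lemma integral_sub_mul_integral_le_mul_Egamma [IsFiniteMeasure P] [IsFiniteMeasure Q]
    (hγ : 0 ≤ γ) {f : Y → ℝ} {c : ℝ} (hf : Measurable f) (hf0 : ∀ y, 0 ≤ f y)
    (hfc : ∀ y, f y ≤ c) (hc : 0 ≤ c) :
    ∫ y, f y ∂P - γ * ∫ y, f y ∂Q ≤ c * Egamma γ P Q := by
  set γQ : Measure Y := γ.toNNReal • Q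
  have hγQ : ∀ {g : Y → ℝ} (s : Set Y), ∫ y in s, g y ∂γQ = γ * ∫ y in s, g y ∂Q := by
    intro g s
    rw [Measure.restrict_smul, integral_smul_nnreal_measure, NNReal.smul_def,
      Real.coe_toNNReal γ hγ, smul_eq_mul]
  have hint : ∀ (ρ : Measure Y) [IsFiniteMeasure ρ], Integrable f ρ := fun ρ _ ↦
    .of_bound hf.aestronglyMeasurable c
      (.of_forall fun y ↦ by rw [norm_of_nonneg (hf0 y)]; exact hfc y)
  obtain ⟨s, hs⟩ := exists_isHahnDecomposition γQ P
  have hs_meas := hs.measurableSet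
  have h_on : ∫ y in s, (c - f y) ∂γQ ≤ ∫ y in s, (c - f y) ∂P :=
    integral_mono_measure hs.le_on (.of_forall fun y ↦ sub_nonneg.2 (hfc y))
      ((integrable_const c).sub (hint P)).restrict
  have h_off : ∫ y in sᶜ, f y ∂P ≤ ∫ y in sᶜ, f y ∂γQ :=
    integral_mono_measure hs.ge_on_compl (.of_forall hf0) (hint γQ).restrict
  have h_const : ∀ (ρ : Measure Y) [IsFiniteMeasure ρ],
      ∫ y in s, (c - f y) ∂ρ = c * (ρ s).toReal - ∫ y in s, f y ∂ρ := fun ρ _ ↦ by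
    rw [integral_sub (integrable_const c) (hint ρ).restrict, setIntegral_const, smul_eq_mul,
      measureReal_def, mul_comm]
  rw [hγQ, h_const, h_const] at h_on
  rw [hγQ] at h_off
  have hsplit := integral_add_compl hs_meas (hint P)
  have hsplitQ := integral_add_compl hs_meas (hint Q)
  have hS := mul_le_mul_of_nonneg_left (le_Egamma (P := P) (Q := Q) hγ hs_meas) hc
  nlinarith

end Egamma

section Contraction

variable {Y : Type*} [MeasurableSpace Y] {γ : ℝ}

lemma toReal_bind_apply (μ : Measure Y) (K : Kernel Y Y) [IsFiniteKernel K] {B : Set Y}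
    (hB : MeasurableSet B) : ((μ.bind K) B).toReal = ∫ y, (K y B).toReal ∂μ := by
  rw [Measure.bind_apply hB K.measurable.aemeasurable,
    integral_toReal (K.measurable_coe hB).aemeasurable (.of_forall fun y ↦ measure_lt_top _ _)]

lemma Egamma_bind_le_mul (hγ : 1 ≤ γ) (K : Kernel Y Y) [IsMarkovKernel K] (μ ν : Measure Y)
    [IsProbabilityMeasure μ] [IsProbabilityMeasure ν] {r : ℝ}
    (hr : ∀ y₁ y₂, Egamma γ (K y₁) (K y₂) ≤ r) :
    Egamma γ (μ.bind K) (ν.bind K) ≤ r * Egamma γ μ ν := by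
  have hγ0 : 0 ≤ γ := by linarith
  have hY : Nonempty Y := nonempty_of_isProbabilityMeasure μ
  refine Egamma_le_of_forall fun B hB ↦ ?_
  rw [toReal_bind_apply μ K hB, toReal_bind_apply ν K hB]
  set g : Y → ℝ := fun y ↦ (K y B).toReal
  set m := ⨅ y, g y
  have hm0 : 0 ≤ m := Real.iInf_nonneg fun _ ↦ ENNReal.toReal_nonneg
  have hm_le : ∀ y, m ≤ g y := ciInf_le ⟨0, by rintro _ ⟨y, rfl⟩; exact ENNReal.toReal_nonneg⟩
  have hg_le : ∀ y, g y ≤ γ * m + r := fun y ↦ by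
    have : (g y - r) / γ ≤ m := le_ciInf fun y' ↦ by
      rw [div_le_iff₀ (by linarith)]
      linarith [(le_Egamma (P := K y) (Q := K y') hγ0 hB).trans (hr y y')]
    rw [div_le_iff₀ (by linarith)] at this
    linarith
  obtain ⟨y₀⟩ := hY
  have hshift := integral_sub_mul_integral_le_mul_Egamma (P := μ) (Q := ν) hγ0
    (((K.measurable_coe hB).ennreal_toReal).sub_const m) (fun y ↦ sub_nonneg.2 (hm_le y))
    (c := (γ - 1) * m + r) (fun y ↦ by linarith [hg_le y])
    (by linarith [hm_le y₀, hg_le y₀])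
  have hint : ∀ (ρ : Measure Y) [IsProbabilityMeasure ρ], Integrable g ρ := fun ρ _ ↦
    .of_bound (K.measurable_coe hB).ennreal_toReal.aestronglyMeasurable 1
      (.of_forall fun y ↦ by
        rw [norm_of_nonneg ENNReal.toReal_nonneg]; exact measureReal_le_one)
  rw [integral_sub (hint μ) (integrable_const m), integral_sub (hint ν) (integrable_const m),
    integral_const, integral_const, probReal_univ, probReal_univ, one_smul] at hshift
  have hE1 : Egamma γ μ ν ≤ 1 := Egamma_le_one hγ0
  nlinarith [mul_nonneg (mul_nonneg hm0 (sub_nonneg.2 hγ)) (sub_nonneg.2 hE1)]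

lemma etaGamma_nonneg (K : Kernel Y Y) : 0 ≤ etaGamma γ K :=
  Real.iSup_nonneg fun _ ↦ div_nonneg Egamma_nonneg Egamma_nonneg

lemma etaGamma_le (hγ : 1 ≤ γ) (K : Kernel Y Y) [IsMarkovKernel K] {r : ℝ} (hr0 : 0 ≤ r)
    (hr : ∀ y₁ y₂, Egamma γ (K y₁) (K y₂) ≤ r) : etaGamma γ K ≤ r := by
  refine Real.iSup_le (fun ⟨(μ, ν), hμ, hν, hμν⟩ ↦ ?_) hr0
  have hpos : 0 < Egamma γ μ ν := Egamma_nonneg.lt_of_ne' hμν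
  rw [div_le_iff₀ hpos]
  exact Egamma_bind_le_mul hγ K μ ν hr

lemma Egamma_le_etaGamma [MeasurableSingletonClass Y] (hγ : 1 ≤ γ) (K : Kernel Y Y)
    [IsMarkovKernel K] (y₁ y₂ : Y) : Egamma γ (K y₁) (K y₂) ≤ etaGamma γ K := by
  have hγ0 : 0 ≤ γ := by linarith
  obtain rfl | hne := eq_or_ne y₁ y₂
  · rw [Egamma_self_eq_zero hγ]
    exact etaGamma_nonneg K
  have hbdd : BddAbove (Set.range fun p : {p : Measure Y × Measure Y //
      IsProbabilityMeasure p.1 ∧ IsProbabilityMeasure p.2 ∧ Egamma γ p.1 p.2 ≠ 0} ↦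
      Egamma γ (p.1.1.bind K) (p.1.2.bind K) / Egamma γ p.1.1 p.1.2) := by
    refine ⟨1, ?_⟩
    rintro _ ⟨⟨⟨μ, ν⟩, hμ, hν, -⟩, rfl⟩
    have hle := Egamma_bind_le_mul hγ K μ ν fun _ _ ↦ Egamma_le_one hγ0
    exact div_le_one_of_le₀ (by simpa using hle) Egamma_nonneg
  have hdirac : Egamma γ (Measure.dirac y₁) (Measure.dirac y₂) ≠ 0 := by
    simp [Egamma_dirac_dirac hγ0 hne]
  simpa [etaGamma, Measure.dirac_bind K.measurable, Egamma_dirac_dirac hγ0 hne] using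
    le_ciSup hbdd ⟨(Measure.dirac y₁, Measure.dirac y₂), ⟨inferInstance, inferInstance, hdirac⟩⟩

end Contraction

theorem contraction_coeff_Egamma_eq_sup_general {Y : Type*} [MeasurableSpace Y]
    [MeasurableSingletonClass Y]
    (K : Kernel Y Y) [IsMarkovKernel K] (γ : ℝ) (hγ : 1 ≤ γ) :
    etaGamma γ K = ⨆ p : Y × Y, Egamma γ (K p.1) (K p.2) := by
  have hγ0 : 0 ≤ γ := by linarith
  have hbdd : BddAbove (Set.range fun p : Y × Y ↦ Egamma γ (K p.1) (K p.2)) :=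
    ⟨1, by rintro _ ⟨p, rfl⟩; exact Egamma_le_one hγ0⟩
  refine le_antisymm ?_ ?_
  · exact etaGamma_le hγ K (Real.iSup_nonneg fun _ ↦ Egamma_nonneg)
      fun y₁ y₂ ↦ le_ciSup hbdd (y₁, y₂)
  · exact Real.iSup_le (fun p ↦ Egamma_le_etaGamma hγ K p.1 p.2) (etaGamma_nonneg K)

/-- For a Markov kernel `K` on a measurable space `Y` with measurable
singletons and at least three points, the contraction coefficient of `K` under the
`E_γ`-divergence equals the supremum of `E_γ(K(y₁) ‖ K(y₂))` over pairs `y₁, y₂ ∈ Y`. -/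
theorem contraction_coeff_Egamma_eq_sup {Y : Type*} [MeasurableSpace Y]
    [MeasurableSingletonClass Y]
    (hY : ∃ a b c : Y, a ≠ b ∧ a ≠ c ∧ b ≠ c)
    (K : Kernel Y Y) [IsMarkovKernel K] (γ : ℝ) (hγ : 1 ≤ γ) :
    etaGamma γ K = ⨆ p : Y × Y, Egamma γ (K p.1) (K p.2) :=
  contraction_coeff_Egamma_eq_sup_general K γ hγ
end

section
/- For all m₁, m₂ ∈ ℝ, v > 0 and γ ≥ 1, the E_γ-divergence between two Laplace distributions with the same scale satisfies E_γ(L(m₁,v) ‖ L(m₂,v)) = max{0, 1 − exp((v·log γ − |m₁ − m₂|)/(2v))}. -/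
open MeasureTheory ProbabilityTheory Real

/-- The Laplace distribution on `ℝ` with mean `m` and scale `v` (variance `2v²`). -/
noncomputable def laplaceMeasure (m v : ℝ) : Measure ℝ :=
  volume.withDensity fun t => ENNReal.ofReal ((1 / (2 * v)) * Real.exp (-|t - m| / v))

/-!
By the Neyman–Pearson argument, the supremum defining `E_γ(P ‖ Q)` for `P = f μ`, `Q = g μ` is
attained on any set containing `{f > γ g}` and contained in `{f ≥ γ g}`. For Laplace densities
with `m₂ ≤ m₁` the log-likelihood ratio is `(|t - m₂| - |t - m₁|) / v`, nondecreasing in `t` with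
maximum `(m₁ - m₂) / v`. So the optimal set is empty when `m₁ - m₂ ≤ v log γ`, and otherwise the
half-line `(t₀, ∞)` with `t₀ = (m₁ + m₂ + v log γ) / 2`, where the two Laplace tails give
`1 - exp((v log γ - (m₁ - m₂)) / (2v))`. The case `m₁ < m₂` follows by reflecting `t ↦ -t`.
-/

open Set

section Egamma

variable {α β : Type*} [MeasurableSpace α] [MeasurableSpace β]

theorem Egamma_eq_of_forall_le {γ : ℝ} {P Q : Measure α} {S : Set α} (hS : MeasurableSet S)
    (h : ∀ A, MeasurableSet A →
      (P A).toReal - γ * (Q A).toReal ≤ (P S).toReal - γ * (Q S).toReal) :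
    Egamma γ P Q = (P S).toReal - γ * (Q S).toReal := by
  have : Nonempty {A : Set α // MeasurableSet A} := ⟨⟨S, hS⟩⟩
  exact le_antisymm (ciSup_le fun A => h A.1 A.2)
    (le_ciSup ⟨_, forall_mem_range.2 fun A => h A.1 A.2⟩
      (⟨S, hS⟩ : {A : Set α // MeasurableSet A}))

theorem Egamma_map_measurableEquiv (e : α ≃ᵐ β) (γ : ℝ) (P Q : Measure α) :
    Egamma γ (P.map e) (Q.map e) = Egamma γ P Q := by
  let preimageEquiv : {A : Set β // MeasurableSet A} ≃ {B : Set α // MeasurableSet B} :=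
    { toFun A := ⟨e ⁻¹' A, e.measurable A.2⟩
      invFun B := ⟨e.symm ⁻¹' B, e.symm.measurable B.2⟩
      left_inv A := Subtype.ext (e.symm.preimage_symm_preimage A.1)
      right_inv B := Subtype.ext (e.preimage_symm_preimage B.1) }
  unfold Egamma
  rw [← preimageEquiv.iSup_comp]
  simp only [e.map_apply]
  rfl

theorem setIntegral_le_setIntegral_of_nonneg_on_of_nonpos_off {μ : Measure α} {f : α → ℝ}
    (hf : Integrable f μ) {S A : Set α} (hS : MeasurableSet S) (hA : MeasurableSet A)
    (hpos : ∀ x ∈ S, 0 ≤ f x) (hneg : ∀ x ∉ S, f x ≤ 0) :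
    ∫ x in A, f x ∂μ ≤ ∫ x in S, f x ∂μ :=
  calc ∫ x in A, f x ∂μ = ∫ x in A ∩ S, f x ∂μ + ∫ x in A \ S, f x ∂μ :=
        (integral_inter_add_sdiff hS hf.integrableOn).symm
    _ ≤ ∫ x in A ∩ S, f x ∂μ :=
        add_le_of_nonpos_right (setIntegral_nonpos (hA.diff hS) fun x hx => hneg x hx.2)
    _ ≤ ∫ x in S, f x ∂μ :=
        setIntegral_mono_set hf.integrableOn ((ae_restrict_iff' hS).2 (ae_of_all _ hpos))
          inter_subset_right.eventuallyLE

theorem toReal_withDensity_ofReal_apply {μ : Measure α} {f : α → ℝ} (hf : 0 ≤ f)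
    (hfm : AEStronglyMeasurable f μ) {s : Set α} (hs : MeasurableSet s) :
    (μ.withDensity (fun x => ENNReal.ofReal (f x)) s).toReal = ∫ x in s, f x ∂μ := by
  rw [withDensity_apply _ hs, integral_eq_lintegral_of_nonneg_ae (ae_of_all _ hf) hfm.restrict]

theorem Egamma_withDensity_eq_of_separating {μ : Measure α} {f g : α → ℝ} {γ : ℝ}
    (hf : Integrable f μ) (hg : Integrable g μ) (hf0 : 0 ≤ f) (hg0 : 0 ≤ g)
    {S : Set α} (hS : MeasurableSet S) (hpos : ∀ x ∈ S, γ * g x ≤ f x)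
    (hneg : ∀ x ∉ S, f x ≤ γ * g x) :
    Egamma γ (μ.withDensity fun x => ENNReal.ofReal (f x))
        (μ.withDensity fun x => ENNReal.ofReal (g x)) =
      ∫ x in S, f x ∂μ - γ * ∫ x in S, g x ∂μ := by
  have hdiff : ∀ A, MeasurableSet A →
      (μ.withDensity (fun x => ENNReal.ofReal (f x)) A).toReal
          - γ * (μ.withDensity (fun x => ENNReal.ofReal (g x)) A).toReal
        = ∫ x in A, (f x - γ * g x) ∂μ := fun A hA => by
    rw [toReal_withDensity_ofReal_apply hf0 hf.1 hA, toReal_withDensity_ofReal_apply hg0 hg.1 hA,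
      integral_sub hf.integrableOn (hg.const_mul γ).integrableOn, integral_const_mul]
  rw [Egamma_eq_of_forall_le hS fun A hA => ?_, hdiff S hS,
    integral_sub hf.integrableOn (hg.const_mul γ).integrableOn, integral_const_mul]
  rw [hdiff A hA, hdiff S hS]
  exact setIntegral_le_setIntegral_of_nonneg_on_of_nonpos_off (hf.sub (hg.const_mul γ)) hS hA
    (fun x hx => sub_nonneg.2 (hpos x hx)) fun x hx => sub_nonpos.2 (hneg x hx)

end Egamma

section Laplace

noncomputable def laplacePDFReal (m v t : ℝ) : ℝ := 1 / (2 * v) * exp (-|t - m| / v)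

variable {m v : ℝ}

theorem laplacePDFReal_nonneg (hv : 0 ≤ v) (t : ℝ) : 0 ≤ laplacePDFReal m v t := by
  unfold laplacePDFReal; positivity

theorem laplacePDFReal_neg (m v t : ℝ) : laplacePDFReal (-m) v (-t) = laplacePDFReal m v t := by
  rw [laplacePDFReal, laplacePDFReal, neg_sub_neg, abs_sub_comm]

theorem laplacePDFReal_of_le {t : ℝ} (h : m ≤ t) :
    laplacePDFReal m v t = exp (m / v) / (2 * v) * exp (-v⁻¹ * t) := by
  rw [laplacePDFReal, abs_of_nonneg (sub_nonneg.2 h),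
    show -(t - m) / v = m / v + -v⁻¹ * t by ring, exp_add]
  ring

theorem integrableOn_Ioi_laplacePDFReal (hv : 0 < v) {a : ℝ} (h : m ≤ a) :
    IntegrableOn (laplacePDFReal m v) (Ioi a) :=
  IntegrableOn.congr_fun ((integrableOn_exp_mul_Ioi (neg_lt_zero.2 (inv_pos.2 hv)) a).const_mul _)
    (fun _ ht => (laplacePDFReal_of_le (h.trans (le_of_lt ht))).symm) measurableSet_Ioi

theorem setIntegral_Ioi_laplacePDFReal_of_le (hv : 0 < v) {a : ℝ} (h : m ≤ a) :
    ∫ t in Ioi a, laplacePDFReal m v t = exp ((m - a) / v) / 2 := by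
  rw [setIntegral_congr_fun measurableSet_Ioi
      fun _ ht => laplacePDFReal_of_le (h.trans (le_of_lt ht)), integral_const_mul,
    integral_exp_mul_Ioi (neg_lt_zero.2 (inv_pos.2 hv)),
    show (m - a) / v = m / v + -v⁻¹ * a by ring, exp_add]
  field_simp

theorem integrableOn_Iic_laplacePDFReal (hv : 0 < v) {a : ℝ} (h : a ≤ m) :
    IntegrableOn (laplacePDFReal m v) (Iic a) := by
  simpa only [laplacePDFReal_neg] using IntegrableOn.comp_neg_Iic
    ((integrableOn_Ici_iff_integrableOn_Ioi (by simp)).2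
      (integrableOn_Ioi_laplacePDFReal hv (neg_le_neg h)))

theorem setIntegral_Iic_laplacePDFReal_of_le (hv : 0 < v) {a : ℝ} (h : a ≤ m) :
    ∫ t in Iic a, laplacePDFReal m v t = exp ((a - m) / v) / 2 := by
  simp_rw [← laplacePDFReal_neg m v]
  rw [integral_comp_neg_Iic, setIntegral_Ioi_laplacePDFReal_of_le hv (neg_le_neg h)]
  ring_nf

theorem integrable_laplacePDFReal (hv : 0 < v) : Integrable (laplacePDFReal m v) := by
  rw [← integrableOn_univ, ← Iic_union_Ioi (a := m), integrableOn_union]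
  exact ⟨integrableOn_Iic_laplacePDFReal hv le_rfl, integrableOn_Ioi_laplacePDFReal hv le_rfl⟩

theorem integral_laplacePDFReal (hv : 0 < v) : ∫ t, laplacePDFReal m v t = 1 := by
  rw [← integral_add_compl measurableSet_Iic (integrable_laplacePDFReal hv), compl_Iic,
    setIntegral_Iic_laplacePDFReal_of_le hv le_rfl, setIntegral_Ioi_laplacePDFReal_of_le hv le_rfl,
    sub_self, zero_div, exp_zero]
  norm_num

theorem setIntegral_Ioi_laplacePDFReal_of_ge (hv : 0 < v) {a : ℝ} (h : a ≤ m) :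
    ∫ t in Ioi a, laplacePDFReal m v t = 1 - exp ((a - m) / v) / 2 := by
  rw [← integral_laplacePDFReal (m := m) hv, ← integral_add_compl measurableSet_Iic
    (integrable_laplacePDFReal hv), compl_Iic, setIntegral_Iic_laplacePDFReal_of_le hv h]
  ring

theorem laplaceMeasure_eq_withDensity (m v : ℝ) :
    laplaceMeasure m v = volume.withDensity fun t => ENNReal.ofReal (laplacePDFReal m v t) :=
  rfl

theorem map_neg_laplaceMeasure (m v : ℝ) :
    (laplaceMeasure m v).map (MeasurableEquiv.neg ℝ) = laplaceMeasure (-m) v := by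
  ext s hs
  rw [MeasurableEquiv.map_apply, laplaceMeasure_eq_withDensity, laplaceMeasure_eq_withDensity,
    withDensity_apply _ hs, withDensity_apply _ ((MeasurableEquiv.neg ℝ).measurable hs),
    ← (Measure.measurePreserving_neg volume).setLIntegral_comp_preimage_emb
      (MeasurableEquiv.neg ℝ).measurableEmbedding
      (fun t => ENNReal.ofReal (laplacePDFReal (-m) v t))]
  simp only [laplacePDFReal_neg]
  rfl

theorem mul_laplacePDFReal {γ : ℝ} (hγ : 0 < γ) (hv : v ≠ 0) (t : ℝ) :
    γ * laplacePDFReal m v t = 1 / (2 * v) * exp ((v * log γ - |t - m|) / v) := by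
  rw [laplacePDFReal, show (v * log γ - |t - m|) / v = log γ + -|t - m| / v by field_simp; ring,
    exp_add, exp_log hγ]
  ring

theorem mul_laplacePDFReal_le_iff {γ m₁ m₂ t : ℝ} (hγ : 0 < γ) (hv : 0 < v) :
    γ * laplacePDFReal m₂ v t ≤ laplacePDFReal m₁ v t ↔
      v * log γ ≤ |t - m₂| - |t - m₁| := by
  rw [mul_laplacePDFReal hγ hv.ne', laplacePDFReal, mul_le_mul_iff_right₀ (by positivity),
    exp_le_exp, div_le_div_iff_of_pos_right hv]
  constructor <;> intro h <;> linarith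

theorem laplacePDFReal_le_mul_iff {γ m₁ m₂ t : ℝ} (hγ : 0 < γ) (hv : 0 < v) :
    laplacePDFReal m₁ v t ≤ γ * laplacePDFReal m₂ v t ↔
      |t - m₂| - |t - m₁| ≤ v * log γ := by
  rw [mul_laplacePDFReal hγ hv.ne', laplacePDFReal, mul_le_mul_iff_right₀ (by positivity),
    exp_le_exp, div_le_div_iff_of_pos_right hv]
  constructor <;> intro h <;> linarith

end Laplace

section EgammaLaplace

variable {m₁ m₂ v γ : ℝ}

theorem Egamma_laplaceMeasure_eq_zero (hv : 0 < v) (hγ : 0 < γ)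
    (h : |m₁ - m₂| ≤ v * log γ) :
    Egamma γ (laplaceMeasure m₁ v) (laplaceMeasure m₂ v) = 0 := by
  have hneg (t : ℝ) : laplacePDFReal m₁ v t ≤ γ * laplacePDFReal m₂ v t := by
    refine (laplacePDFReal_le_mul_iff hγ hv).2 (le_trans ?_ h)
    simpa only [sub_sub_sub_cancel_left] using abs_sub_abs_le_abs_sub (t - m₂) (t - m₁)
  rw [laplaceMeasure_eq_withDensity, laplaceMeasure_eq_withDensity,
    Egamma_withDensity_eq_of_separating (integrable_laplacePDFReal hv)
      (integrable_laplacePDFReal hv) (laplacePDFReal_nonneg hv.le) (laplacePDFReal_nonneg hv.le)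
      MeasurableSet.empty (by simp) fun t _ => hneg t]
  simp

theorem Egamma_laplaceMeasure_of_lt (hv : 0 < v) (hγ : 1 ≤ γ) (h : v * log γ < m₁ - m₂) :
    Egamma γ (laplaceMeasure m₁ v) (laplaceMeasure m₂ v) =
      1 - exp ((v * log γ - (m₁ - m₂)) / (2 * v)) := by
  have hc : 0 ≤ v * log γ := mul_nonneg hv.le (log_nonneg hγ)
  have hγ0 : 0 < γ := one_pos.trans_le hγ
  set t₀ := (m₁ + m₂ + v * log γ) / 2 with ht₀
  have hpos (t : ℝ) (ht : t₀ < t) :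
      γ * laplacePDFReal m₂ v t ≤ laplacePDFReal m₁ v t := by
    rw [mul_laplacePDFReal_le_iff hγ0 hv]
    cases abs_cases (t - m₂) <;> cases abs_cases (t - m₁) <;> linarith
  have hneg (t : ℝ) (ht : t ≤ t₀) :
      laplacePDFReal m₁ v t ≤ γ * laplacePDFReal m₂ v t := by
    rw [laplacePDFReal_le_mul_iff hγ0 hv]
    cases abs_cases (t - m₂) <;> cases abs_cases (t - m₁) <;> linarith
  rw [laplaceMeasure_eq_withDensity, laplaceMeasure_eq_withDensity,
    Egamma_withDensity_eq_of_separating (integrable_laplacePDFReal hv)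
      (integrable_laplacePDFReal hv) (laplacePDFReal_nonneg hv.le) (laplacePDFReal_nonneg hv.le)
      measurableSet_Ioi hpos fun t ht => hneg t (not_lt.1 ht),
    setIntegral_Ioi_laplacePDFReal_of_ge hv (by linarith),
    setIntegral_Ioi_laplacePDFReal_of_le hv (by linarith)]
  have hm₁ : (t₀ - m₁) / v = (v * log γ - (m₁ - m₂)) / (2 * v) := by
    rw [ht₀]; field_simp; ring
  have hm₂ : γ * exp ((m₂ - t₀) / v) = exp ((v * log γ - (m₁ - m₂)) / (2 * v)) :=
    calc γ * exp ((m₂ - t₀) / v) = exp (log γ + (m₂ - t₀) / v) := by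
          rw [exp_add, exp_log hγ0]
      _ = exp ((v * log γ - (m₁ - m₂)) / (2 * v)) := by rw [ht₀]; congr 1; field_simp; ring
  rw [hm₁, mul_div_assoc', hm₂]
  ring

end EgammaLaplace

/-- The `E_γ`-divergence between two Laplace distributions with the same
scale `v`:  `E_γ(L(m₁,v) ‖ L(m₂,v)) = [1 − exp((v log γ − |m₁ − m₂|)/(2v))]₊`. -/
theorem Egamma_laplace (m₁ m₂ v γ : ℝ) (hv : 0 < v) (hγ : 1 ≤ γ) :
    Egamma γ (laplaceMeasure m₁ v) (laplaceMeasure m₂ v) =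
      max 0 (1 - Real.exp ((v * Real.log γ - |m₁ - m₂|) / (2 * v))) := by
  wlog hm : m₂ ≤ m₁ generalizing m₁ m₂
  · rw [← Egamma_map_measurableEquiv (MeasurableEquiv.neg ℝ), map_neg_laplaceMeasure,
      map_neg_laplaceMeasure, this (-m₁) (-m₂) (by linarith), ← abs_neg, neg_sub_neg, neg_sub]
  have habs : |m₁ - m₂| = m₁ - m₂ := abs_of_nonneg (sub_nonneg.2 hm)
  rw [habs]
  rcases le_or_gt (m₁ - m₂) (v * log γ) with h | h
  · rw [Egamma_laplaceMeasure_eq_zero hv (one_pos.trans_le hγ) (habs.trans_le h), max_eq_left]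
    exact sub_nonpos.2 (one_le_exp (div_nonneg (sub_nonneg.2 h) (by positivity)))
  · rw [Egamma_laplaceMeasure_of_lt hv hγ h, max_eq_right]
    exact sub_nonneg.2
      (exp_le_one_iff.2 (div_nonpos_of_nonpos_of_nonneg (by linarith) (by positivity)))
end
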